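/- arXiv:1804.09578 — 2 statements merged into one kernel-verified Lean document; each statement's English description precedes it below -/
import Mathlib

section
/- If f : ℝⁿ → ℝ is convex with a unique global minimizer x*, then any sequence of subgradient steps with diminishing step sizes (step sizes α_k → 0, ∑ α_k = ∞, bounded subgradients) yields function values converging to f(x*). -/
open Filter
open scoped RealInnerProductSpace

/-- Subgradient method with diminishing, non-summable step sizes and bounded
subgradients on a convex function with a unique global minimizer `x*`: the function
values converge to `f(x*)`. -/
theorem stmt18 {n : ℕ} (f : EuclideanSpace ℝ (Fin n) → ℝ)
    (hconv : ConvexOn ℝ Set.univ f)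
    (xstar : EuclideanSpace ℝ (Fin n))
    (hmin : ∀ y, f xstar ≤ f y)
    (huniq : ∀ y, f y = f xstar → y = xstar)
    (x g : ℕ → EuclideanSpace ℝ (Fin n)) (α : ℕ → ℝ) (G : ℝ)
    (hαpos : ∀ k, 0 < α k)
    (hαlim : Tendsto α atTop (nhds 0))
    (hαsum : Tendsto (fun N => ∑ k ∈ Finset.range N, α k) atTop atTop)
    (hg : ∀ k, ∀ y, f (x k) + ⟪g k, y - x k⟫ ≤ f y)
    (hG : ∀ k, ‖g k‖ ≤ G)
    (hstep : ∀ k, x (k + 1) = x k - α k • g k) :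
    Tendsto (fun k => f (x k)) atTop (nhds (f xstar)) := by
  have hcont : Continuous f :=
    continuousOn_univ.mp (hconv.continuousOn isOpen_univ)
  suffices hx : Tendsto x atTop (nhds xstar) by
    exact (hcont.tendsto xstar).comp hx
  rcases subsingleton_or_nontrivial (EuclideanSpace ℝ (Fin n)) with hs | hs
  · have hxk : ∀ k, x k = xstar := fun k => Subsingleton.elim _ _
    simpa [funext hxk] using (tendsto_const_nhds : Tendsto (fun _ : ℕ => xstar) atTop _)
  have hG0 : 0 ≤ G := le_trans (norm_nonneg _) (hG 0)
  -- key inequality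
  have key : ∀ k, ‖x (k+1) - xstar‖^2 ≤
      ‖x k - xstar‖^2 - 2 * α k * (f (x k) - f xstar) + (α k)^2 * G^2 := by
    intro k
    have hxg : f (x k) - f xstar ≤ ⟪g k, x k - xstar⟫ := by
      have h1 := hg k xstar
      have h2 : ⟪g k, xstar - x k⟫ = -⟪g k, x k - xstar⟫ := by
        rw [← inner_neg_right, neg_sub]
      linarith [h1, h2.le, h2.ge]
    have expand : ‖x (k+1) - xstar‖^2 =
        ‖x k - xstar‖^2 - 2 * α k * ⟪g k, x k - xstar⟫ + (α k)^2 * ‖g k‖^2 := by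
      rw [hstep k, sub_right_comm, norm_sub_sq_real, real_inner_smul_right,
        norm_smul, Real.norm_eq_abs, abs_of_pos (hαpos k), real_inner_comm]
      ring
    have hgn : ‖g k‖^2 ≤ G^2 := pow_le_pow_left₀ (norm_nonneg _) (hG k) 2
    have hα := (hαpos k).le
    nlinarith [sq_nonneg (α k)]
  have hfge : ∀ k, f xstar ≤ f (x k) := fun k => hmin _
  rw [Metric.tendsto_atTop]
  intro ε hε
  have hε2 : (0:ℝ) < ε / 2 := by linarith
  -- get δ
  obtain ⟨δ, hδpos, hδle⟩ : ∃ δ > 0, ∀ y, ε/2 ≤ ‖y - xstar‖ → f xstar + δ ≤ f y := by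
    obtain ⟨v, hv⟩ := exists_norm_eq (EuclideanSpace ℝ (Fin n)) hε2.le
    have hsph : (Metric.sphere xstar (ε/2)).Nonempty := by
      refine ⟨xstar + v, ?_⟩
      simp [mem_sphere_iff_norm, hv]
    obtain ⟨y₀, hy₀mem, hy₀min⟩ :=
      (isCompact_sphere xstar (ε/2)).exists_isMinOn hsph hcont.continuousOn
    have hy₀ : ‖y₀ - xstar‖ = ε/2 := mem_sphere_iff_norm.mp hy₀mem
    have hy₀ne : y₀ ≠ xstar := by
      intro h; rw [h] at hy₀; simp at hy₀; linarith
    have hδpos : 0 < f y₀ - f xstar := by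
      rcases lt_or_eq_of_le (hmin y₀) with h | h
      · linarith
      · exact absurd (huniq y₀ h.symm) hy₀ne
    refine ⟨f y₀ - f xstar, hδpos, fun y hy => ?_⟩
    have hr : (0:ℝ) < ‖y - xstar‖ := lt_of_lt_of_le hε2 hy
    set r := ‖y - xstar‖ with hrdef
    set t : ℝ := (ε/2) / r with htdef
    have ht0 : 0 < t := div_pos hε2 hr
    have ht1 : t ≤ 1 := by
      rw [htdef, div_le_one hr]; exact hy
    have hz : (1 - t) • xstar + t • y ∈ Metric.sphere xstar (ε/2) := by
      rw [mem_sphere_iff_norm]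
      have : (1 - t) • xstar + t • y - xstar = t • (y - xstar) := by
        rw [smul_sub]; module
      rw [this, norm_smul, Real.norm_eq_abs, abs_of_pos ht0, htdef]
      field_simp
      rw [← hrdef]
    have hcv := hconv.2 (Set.mem_univ xstar) (Set.mem_univ y)
      (by linarith : (0:ℝ) ≤ 1 - t) ht0.le (by ring)
    have hmin2 : f y₀ ≤ f ((1 - t) • xstar + t • y) := hy₀min hz
    simp only [smul_eq_mul] at hcv
    have hfy : f xstar ≤ f y := hmin y
    nlinarith [mul_le_mul_of_nonneg_right ht1 (sub_nonneg.mpr hfy)]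
  -- choose N₀
  set c : ℝ := min (δ / (G^2 + 1)) (ε / (2 * (G + 1))) with hcdef
  have hc0 : 0 < c := by
    apply lt_min
    · positivity
    · positivity
  obtain ⟨N₀, hN₀⟩ : ∃ N₀, ∀ k ≥ N₀, α k < c := by
    have := (Metric.tendsto_atTop.mp hαlim) c hc0
    obtain ⟨N, hN⟩ := this
    exact ⟨N, fun k hk => by
      have := hN k hk
      rw [Real.dist_eq, sub_zero, abs_of_pos (hαpos k)] at this
      exact this⟩
  have hαG2 : ∀ k ≥ N₀, α k * G^2 ≤ δ := by
    intro k hk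
    have h1 : α k * G^2 ≤ c * (G^2 + 1) := by
      have := (hN₀ k hk).le
      nlinarith [sq_nonneg G, (hαpos k).le]
    have h2 : c * (G^2 + 1) ≤ δ := by
      have : c ≤ δ / (G^2 + 1) := min_le_left _ _
      rw [le_div_iff₀ (by positivity)] at this
      linarith
    linarith
  have hαG : ∀ k ≥ N₀, α k * G ≤ ε / 2 := by
    intro k hk
    have h1 : α k * G ≤ c * (G + 1) := by
      have := (hN₀ k hk).le
      nlinarith [(hαpos k).le]
    have h2 : c * (G + 1) ≤ ε / 2 := by
      have : c ≤ ε / (2 * (G + 1)) := min_le_right _ _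
      rw [le_div_iff₀ (by positivity)] at this
      linarith
    linarith
  -- decrease while far
  have hdec : ∀ k ≥ N₀, ε/2 ≤ ‖x k - xstar‖ →
      ‖x (k+1) - xstar‖^2 ≤ ‖x k - xstar‖^2 - α k * δ := by
    intro k hk hfar
    have h1 := key k
    have h2 : f xstar + δ ≤ f (x k) := hδle _ hfar
    have h3 : α k * G^2 ≤ δ := hαG2 k hk
    have hα := (hαpos k).le
    nlinarith
  -- Claim 1: reach the small ball
  obtain ⟨m, hmN₀, hmball⟩ : ∃ m ≥ N₀, ‖x m - xstar‖ < ε/2 := by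
    by_contra hcon
    push_neg at hcon
    have hfar : ∀ k ≥ N₀, ε/2 ≤ ‖x k - xstar‖ := fun k hk => hcon k hk
    have hind : ∀ m : ℕ, ‖x (N₀ + m) - xstar‖^2 ≤
        ‖x N₀ - xstar‖^2 - δ * ∑ j ∈ Finset.range m, α (N₀ + j) := by
      intro m
      induction m with
      | zero => simp
      | succ m ih =>
        have hk : N₀ + m ≥ N₀ := Nat.le_add_right _ _
        have := hdec (N₀ + m) hk (hfar _ hk)
        rw [Finset.sum_range_succ, ← Nat.add_assoc] at *
        have : ‖x (N₀ + m + 1) - xstar‖^2 ≤ ‖x (N₀+m) - xstar‖^2 - α (N₀+m) * δ := this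
        linarith
    -- tail sums diverge
    have htail : Tendsto (fun m => ∑ j ∈ Finset.range m, α (N₀ + j)) atTop atTop := by
      have h1 : Tendsto (fun m => ∑ k ∈ Finset.range (N₀ + m), α k) atTop atTop :=
        hαsum.comp (tendsto_atTop_mono (fun m => Nat.le_add_left m N₀) tendsto_id)
      have h2 : ∀ m, ∑ j ∈ Finset.range m, α (N₀ + j) =
          (∑ k ∈ Finset.range (N₀ + m), α k) - ∑ k ∈ Finset.range N₀, α k := by
        intro m
        rw [Finset.sum_range_add]
        ring
      simp only [h2]
      exact h1.atTop_add tendsto_const_nhds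
    obtain ⟨m, hm⟩ := (htail.eventually_gt_atTop (‖x N₀ - xstar‖^2 / δ)).exists
    have := hind m
    have h3 : ‖x N₀ - xstar‖^2 / δ < ∑ j ∈ Finset.range m, α (N₀ + j) := hm
    rw [div_lt_iff₀ hδpos] at h3
    nlinarith [sq_nonneg (‖x (N₀ + m) - xstar‖)]
  -- Claim 2: stay in ball of radius ε
  have hstay : ∀ k ≥ m, ‖x k - xstar‖ < ε := by
    intro k hk
    induction k, hk using Nat.le_induction with
    | base => linarith
    | succ k hk ih =>
      have hkN₀ : k ≥ N₀ := le_trans hmN₀ hk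
      by_cases hcase : ‖x k - xstar‖ < ε/2
      · have h1 : ‖x (k+1) - xstar‖ ≤ ‖x k - xstar‖ + α k * ‖g k‖ := by
          rw [hstep k, sub_right_comm]
          calc ‖x k - xstar - α k • g k‖ ≤ ‖x k - xstar‖ + ‖α k • g k‖ := norm_sub_le _ _
          _ = ‖x k - xstar‖ + α k * ‖g k‖ := by
              rw [norm_smul, Real.norm_eq_abs, abs_of_pos (hαpos k)]
        have h2 : α k * ‖g k‖ ≤ α k * G := by
          exact mul_le_mul_of_nonneg_left (hG k) (hαpos k).le
        have h3 := hαG k hkN₀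
        linarith
      · push_neg at hcase
        have h1 := hdec k hkN₀ hcase
        have h2 : ‖x (k+1) - xstar‖^2 < ε^2 := by
          nlinarith [mul_pos (hαpos k) hδpos]
        exact lt_of_pow_lt_pow_left₀ 2 hε.le h2
  exact ⟨m, fun k hk => by rw [dist_eq_norm]; exact hstay k hk⟩
end

section
/- For probability measures P, Q, the identity KL(P‖M) + KL(Q‖M) = ∫ p·log(2p/(p+q)) dμ + ∫ q·log(2q/(p+q)) dμ holds, where M = ½(P+Q) and p, q are densities with respect to a dominating measure μ; consequently 2·JSD(P‖Q) equals the adversarial objective value plus 2·log 2 at the optimal discriminator. -/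
open MeasureTheory Real
open scoped ENNReal

/-! Write `D = dP/d(P+Q)`. The chain rule for Radon–Nikodym derivatives gives `D (p + q) = p`
μ-a.e., so `D = p/(p+q)` wherever `p + q > 0`, and `dP/d(½(P+Q)) = 2D`; integrating against
`P = p • μ` gives the first identity. For the second, `dQ/d(P+Q) = 1 - D`, and
`log (2D) = log 2 + log D` splits off the constants; this needs `log D ∈ L¹(P)`, which holds
because `|D log D| ≤ 1` and `D ≤ 1`. -/

/-- Jensen–Shannon divergence. -/
noncomputable def jsd {Z : Type*} [MeasurableSpace Z] (P Q : Measure Z) : ℝ :=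
  (1/2) * ∫ z, Real.log (2 * (P.rnDeriv (P + Q) z).toReal) ∂P +
  (1/2) * ∫ z, Real.log (2 * (Q.rnDeriv (P + Q) z).toReal) ∂Q

lemma Real.abs_mul_log_le_one {x : ℝ} (hx0 : 0 ≤ x) (hx1 : x ≤ 1) : |x * Real.log x| ≤ 1 := by
  rcases hx0.eq_or_lt with rfl | hx0
  · simp
  · simpa [mul_comm] using (Real.abs_log_mul_self_lt x hx0 hx1).le

namespace MeasureTheory.Measure

variable {Z : Type*} [MeasurableSpace Z]

lemma integrable_log_toReal_rnDeriv_of_le {P ν : Measure Z} [IsFiniteMeasure ν] (hle : P ≤ ν) :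
    Integrable (fun z => Real.log (P.rnDeriv ν z).toReal) P := by
  have : IsFiniteMeasure P := isFiniteMeasure_of_le ν hle
  rw [← integrable_toReal_rnDeriv_mul_iff hle.absolutelyContinuous]
  refine Integrable.of_bound (by fun_prop) 1 ?_
  filter_upwards [rnDeriv_le_one_of_le hle, P.rnDeriv_lt_top ν] with z hz_le hz_top
  exact Real.abs_mul_log_le_one ENNReal.toReal_nonneg (ENNReal.toReal_le_of_le_ofReal zero_le_one
    (by simpa using hz_le))

lemma integral_log_const_mul_toReal_rnDeriv {P ν : Measure Z} [IsProbabilityMeasure P]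
    [IsFiniteMeasure ν] (hle : P ≤ ν) {c : ℝ} (hc : c ≠ 0) :
    ∫ z, Real.log (c * (P.rnDeriv ν z).toReal) ∂P
      = Real.log c + ∫ z, Real.log (P.rnDeriv ν z).toReal ∂P := by
  have hac := hle.absolutelyContinuous
  have hlog_mul : ∀ᵐ z ∂P, Real.log (c * (P.rnDeriv ν z).toReal)
      = Real.log c + Real.log (P.rnDeriv ν z).toReal := by
    filter_upwards [rnDeriv_pos hac, hac.ae_le (P.rnDeriv_lt_top ν)] with z hpos htop
    exact Real.log_mul hc (ENNReal.toReal_pos hpos.ne' htop.ne).ne'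
  rw [integral_congr_ae hlog_mul,
    integral_add (integrable_const _) (integrable_log_toReal_rnDeriv_of_le hle)]
  simp

lemma integral_comp_toReal_rnDeriv_smul (P ν : Measure Z) [IsFiniteMeasure P]
    [P.HaveLebesgueDecomposition ν] (hac : P ≪ ν) {r : ℝ≥0∞} (hr0 : r ≠ 0) (hr_top : r ≠ ∞)
    (F : ℝ → ℝ) :
    ∫ z, F (P.rnDeriv (r • ν) z).toReal ∂P = ∫ z, F (r.toReal⁻¹ * (P.rnDeriv ν z).toReal) ∂P := by
  refine integral_congr_ae ?_
  filter_upwards [hac.ae_le (rnDeriv_smul_right_of_ne_top P ν hr0 hr_top)] with z hz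
  simp [hz, ENNReal.toReal_mul]

lemma toReal_rnDeriv_add_right_eq_one_sub (P Q : Measure Z) [SigmaFinite P] [SigmaFinite Q] :
    ∀ᵐ z ∂(P + Q), (Q.rnDeriv (P + Q) z).toReal = 1 - (P.rnDeriv (P + Q) z).toReal := by
  filter_upwards [rnDeriv_add' P Q (P + Q), rnDeriv_self (P + Q), P.rnDeriv_lt_top (P + Q),
    Q.rnDeriv_lt_top (P + Q)] with z hadd hone hP hQ
  have hsum := congrArg ENNReal.toReal (hone.symm.trans hadd)
  rw [Pi.add_apply, ENNReal.toReal_add hP.ne hQ.ne, ENNReal.toReal_one] at hsum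
  linarith

end MeasureTheory.Measure

section Densities

variable {Z : Type*} [MeasurableSpace Z] {μ : Measure Z} [SigmaFinite μ] {p q : Z → ℝ}
  {P Q : Measure Z} [IsFiniteMeasure P] [IsFiniteMeasure Q]

lemma toReal_rnDeriv_add_of_withDensity (hpm : Measurable p) (hqm : Measurable q)
    (hp0 : ∀ z, 0 ≤ p z) (hq0 : ∀ z, 0 ≤ q z)
    (hP : P = μ.withDensity fun z => ENNReal.ofReal (p z))
    (hQ : Q = μ.withDensity fun z => ENNReal.ofReal (q z)) :
    ∀ᵐ z ∂μ, 0 < p z + q z → (P.rnDeriv (P + Q) z).toReal = p z / (p z + q z) := by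
  have hPQ : P + Q = μ.withDensity fun z => ENNReal.ofReal (p z + q z) := by
    rw [hP, hQ, ← withDensity_add_left hpm.ennreal_ofReal]
    congr with z
    exact (ENNReal.ofReal_add (hp0 z) (hq0 z)).symm
  have hPdens : P.rnDeriv μ =ᵐ[μ] fun z => ENNReal.ofReal (p z) :=
    hP ▸ Measure.rnDeriv_withDensity μ hpm.ennreal_ofReal
  have hPQdens : (P + Q).rnDeriv μ =ᵐ[μ] fun z => ENNReal.ofReal (p z + q z) :=
    hPQ ▸ Measure.rnDeriv_withDensity μ (hpm.add hqm).ennreal_ofReal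
  have hchain := Measure.rnDeriv_mul_rnDeriv (κ := μ)
    (Measure.le_add_right (le_refl P) (ν' := Q)).absolutelyContinuous
  filter_upwards [hchain, hPdens, hPQdens] with z hchain hPdens hPQdens hpos
  rw [Pi.mul_apply, hPQdens, hPdens] at hchain
  rw [eq_div_iff hpos.ne', ← ENNReal.toReal_ofReal hpos.le, ← ENNReal.toReal_mul, hchain,
    ENNReal.toReal_ofReal (hp0 z)]

lemma integral_comp_toReal_rnDeriv_add_of_withDensity (hpm : Measurable p) (hqm : Measurable q)
    (hp0 : ∀ z, 0 ≤ p z) (hq0 : ∀ z, 0 ≤ q z)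
    (hP : P = μ.withDensity fun z => ENNReal.ofReal (p z))
    (hQ : Q = μ.withDensity fun z => ENNReal.ofReal (q z)) (F : ℝ → ℝ) :
    ∫ z, F (P.rnDeriv (P + Q) z).toReal ∂P = ∫ z, p z * F (p z / (p z + q z)) ∂μ := by
  have hchange : ∫ z, F (P.rnDeriv (P + Q) z).toReal ∂P
      = ∫ z, (ENNReal.ofReal (p z)).toReal • F (P.rnDeriv (P + Q) z).toReal ∂μ := by
    subst hP
    exact integral_withDensity_eq_integral_toReal_smul hpm.ennreal_ofReal
      (ae_of_all _ fun _ => ENNReal.ofReal_lt_top) _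
  rw [hchange]
  refine integral_congr_ae ?_
  filter_upwards [toReal_rnDeriv_add_of_withDensity hpm hqm hp0 hq0 hP hQ] with z hz
  rw [ENNReal.toReal_ofReal (hp0 z), smul_eq_mul]
  rcases (hp0 z).eq_or_lt with h0 | hpos
  · simp [← h0]
  · rw [hz (by linarith [hq0 z])]

end Densities

/-- `KL(P‖M) + KL(Q‖M) = ∫ p log(2p/(p+q)) dμ + ∫ q log(2q/(p+q)) dμ` with `M = ½(P+Q)`
and densities `p, q` w.r.t. `μ`; consequently `2·JSD(P‖Q)` equals the adversarial
objective at the optimal discriminator `D* = dP/d(P+Q)` plus `2·log 2`. -/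
theorem stmt19 {Z : Type*} [MeasurableSpace Z] (μ : Measure Z) [SigmaFinite μ]
    (p q : Z → ℝ) (hpm : Measurable p) (hqm : Measurable q)
    (hp0 : ∀ z, 0 ≤ p z) (hq0 : ∀ z, 0 ≤ q z)
    (P Q : Measure Z)
    (hP : P = μ.withDensity fun z => ENNReal.ofReal (p z))
    (hQ : Q = μ.withDensity fun z => ENNReal.ofReal (q z))
    [IsProbabilityMeasure P] [IsProbabilityMeasure Q] :
    (∫ z, Real.log ((P.rnDeriv ((2⁻¹ : ℝ≥0∞) • (P + Q)) z).toReal) ∂P +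
      ∫ z, Real.log ((Q.rnDeriv ((2⁻¹ : ℝ≥0∞) • (P + Q)) z).toReal) ∂Q
        = ∫ z, p z * Real.log (2 * p z / (p z + q z)) ∂μ +
          ∫ z, q z * Real.log (2 * q z / (p z + q z)) ∂μ) ∧
    (2 * jsd P Q
        = (∫ z, Real.log ((P.rnDeriv (P + Q) z).toReal) ∂P +
           ∫ z, Real.log (1 - (P.rnDeriv (P + Q) z).toReal) ∂Q) + 2 * Real.log 2) := by
  have hPle : P ≤ P + Q := Measure.le_add_right le_rfl
  have hQle : Q ≤ P + Q := Measure.le_add_left le_rfl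
  have hP_density : ∫ z, Real.log (2 * (P.rnDeriv (P + Q) z).toReal) ∂P
      = ∫ z, p z * Real.log (2 * p z / (p z + q z)) ∂μ := by
    simpa only [mul_div_assoc] using integral_comp_toReal_rnDeriv_add_of_withDensity
      hpm hqm hp0 hq0 hP hQ (fun x => Real.log (2 * x))
  have hQ_density : ∫ z, Real.log (2 * (Q.rnDeriv (P + Q) z).toReal) ∂Q
      = ∫ z, q z * Real.log (2 * q z / (p z + q z)) ∂μ := by
    simpa only [mul_div_assoc, add_comm (q _), add_comm Q] using
      integral_comp_toReal_rnDeriv_add_of_withDensity hqm hpm hq0 hp0 hQ hP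
        (fun x => Real.log (2 * x))
  have hQ_compl : ∫ z, Real.log (Q.rnDeriv (P + Q) z).toReal ∂Q
      = ∫ z, Real.log (1 - (P.rnDeriv (P + Q) z).toReal) ∂Q :=
    integral_congr_ae <| hQle.absolutelyContinuous.ae_le <|
      (Measure.toReal_rnDeriv_add_right_eq_one_sub P Q).mono fun z hz => congrArg Real.log hz
  constructor
  · have h2 : ((2⁻¹ : ℝ≥0∞).toReal)⁻¹ = 2 := by norm_num
    rw [Measure.integral_comp_toReal_rnDeriv_smul P _ hPle.absolutelyContinuous (by simp)
        (by simp), Measure.integral_comp_toReal_rnDeriv_smul Q _ hQle.absolutelyContinuous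
        (by simp) (by simp), h2, hP_density, hQ_density]
  · rw [jsd, Measure.integral_log_const_mul_toReal_rnDeriv hPle two_ne_zero,
      Measure.integral_log_const_mul_toReal_rnDeriv hQle two_ne_zero, hQ_compl]
    ring
end
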